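/- arXiv:2512.03496 — 8 statements merged into one kernel-verified Lean document; each statement's English description precedes it below -/
import Mathlib

section
/- Let P be a barotropic equation of state. Then for every ρ ∈ ℝ and every v ∈ ℝ with |v| < 1, setting p = P(ρ), the conjunction (ρ > 0 and p > 0) holds if and only if T00 − |T01| > 0, where T00 = (ρ + p)W² − p, T01 = (ρ + p)W²·v and W = (1 − v²)^{-1/2}. In other words, under a barotropic equation of state the primitive admissible set G_p = {(ρ, p, v) : ρ > 0, p > 0, |v| < 1} corresponds exactly to the conservative admissible set G_c = {(a, b) : a − |b| > 0}. -/
/-- Under a barotropic equation of state, the primitive admissible set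
    G_p = {(ρ, p, v) : ρ > 0, p > 0, |v| < 1} corresponds exactly to the
    conservative admissible set G_c = {(a, b) : a − |b| > 0}. -/
theorem stmt_3 (P : ℝ → ℝ)
    (hdiff : Differentiable ℝ P) (hP0 : P 0 = 0)
    (hderiv : ∀ x : ℝ, 0 < deriv P x ∧ deriv P x < 1)
    (hsub : ∀ ρ : ℝ, 0 < ρ → P ρ < Real.sqrt (deriv P ρ) * ρ) :
    ∀ ρ v : ℝ, |v| < 1 →
      ((0 < ρ ∧ 0 < P ρ) ↔
        ((ρ + P ρ) * ((Real.sqrt (1 - v ^ 2))⁻¹) ^ 2 - P ρ)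
          - |(ρ + P ρ) * ((Real.sqrt (1 - v ^ 2))⁻¹) ^ 2 * v| > 0) := by
  intro ρ v hv
  have hmono : StrictMono P := strictMono_of_deriv_pos fun x => (hderiv x).1
  have hg : StrictMono (fun x => x - P x) := strictMono_of_deriv_pos fun x => by
    have hd : HasDerivAt (fun x => x - P x) (1 - deriv P x) x :=
      (hasDerivAt_id x).sub (hdiff x).hasDerivAt
    rw [hd.deriv]
    linarith [(hderiv x).2]
  have hv0 : 0 ≤ |v| := abs_nonneg v
  have hv2 : v ^ 2 = |v| * |v| := by rw [← sq_abs]; ring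
  have hs : 0 < 1 - v ^ 2 := by nlinarith
  have hss : ((Real.sqrt (1 - v ^ 2))⁻¹) ^ 2 = (1 - v ^ 2)⁻¹ := by
    rw [inv_pow, Real.sq_sqrt hs.le]
  rw [hss]
  have hsinv : 0 < (1 - v ^ 2)⁻¹ := inv_pos.mpr hs
  have hsmul : (1 - v ^ 2)⁻¹ * (1 - v ^ 2) = 1 := inv_mul_cancel₀ hs.ne'
  constructor
  · rintro ⟨hρ, hp⟩
    have hpρ : P ρ < ρ := by
      have := hg hρ
      simp only [hP0] at this
      linarith
    have hA : 0 < (ρ + P ρ) * (1 - v ^ 2)⁻¹ := by positivity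
    rw [abs_mul, abs_of_pos hA]
    nlinarith [mul_pos hA (sub_pos.mpr hv), mul_le_mul_of_nonneg_left hv.le hp.le]
  · intro h
    have hρ : 0 < ρ := by
      by_contra hρ
      push_neg at hρ
      have hp0 : P ρ ≤ 0 := by
        have := hmono.le_iff_le.mpr hρ
        rwa [hP0] at this
      have hρp : ρ ≤ P ρ := by
        have := hg.le_iff_le.mpr hρ
        simp only [hP0] at this
        linarith
      have hA : (ρ + P ρ) * (1 - v ^ 2)⁻¹ ≤ 0 := by
        rcases lt_or_eq_of_le hρ with h1 | h1
        · have : ρ + P ρ < 0 := by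
            rcases lt_or_eq_of_le hρp with h2 | h2
            · nlinarith
            · rw [← h2]; linarith
          nlinarith
        · subst h1
          simp [hP0]
      rw [abs_mul, abs_of_nonpos hA] at h
      -- h : (ρ+P ρ)*s⁻¹ - P ρ - (-(A))*|v| > 0, i.e. A(1+|v|) > p
      nlinarith [mul_nonpos_of_nonpos_of_nonneg hA hv0,
        mul_le_mul_of_nonneg_right hρp hsinv.le]
    refine ⟨hρ, ?_⟩
    have := hmono hρ
    rwa [hP0] at this
end

section
/- Let ρ, p, v be real numbers with ρ > 0, 0 < p < ρ, 0 < |v| < 1, and set u := T01/T00 = (ρ + p)v/(ρ + p·v²). Then the discriminant is a perfect square: (ρ + p)² − 4·ρ·p·u² = ((ρ − p·v²)(ρ + p)/(ρ + p·v²))², and the two roots of the quadratic p·u·X² − (ρ + p)·X + ρ·u = 0 in X are exactly v and ρ/(p·v); moreover (ρ + p − √((ρ + p)² − 4ρp·u²))/(2p·u) = v and (ρ + p + √((ρ + p)² − 4ρp·u²))/(2p·u) = ρ/(p·v), and |ρ/(p·v)| > 1. -/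
/-- For ρ > 0, 0 < p < ρ, 0 < |v| < 1 and u = (ρ + p)v/(ρ + p·v²), the discriminant
    (ρ + p)² − 4ρp·u² is a perfect square, the two roots of the quadratic
    p·u·X² − (ρ + p)·X + ρ·u = 0 are exactly v and ρ/(p·v), the minus/plus quadratic
    formulas give v and ρ/(p·v) respectively, and |ρ/(p·v)| > 1. -/
theorem stmt_6 (ρ p v u : ℝ) (hρ : 0 < ρ) (hp : 0 < p) (hpρ : p < ρ)
    (hv0 : 0 < |v|) (hv1 : |v| < 1)
    (hu : u = (ρ + p) * v / (ρ + p * v ^ 2)) :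
    (ρ + p) ^ 2 - 4 * ρ * p * u ^ 2 = ((ρ - p * v ^ 2) * (ρ + p) / (ρ + p * v ^ 2)) ^ 2 ∧
    (∀ X : ℝ, p * u * X ^ 2 - (ρ + p) * X + ρ * u = 0 ↔ (X = v ∨ X = ρ / (p * v))) ∧
    ((ρ + p) - Real.sqrt ((ρ + p) ^ 2 - 4 * ρ * p * u ^ 2)) / (2 * p * u) = v ∧
    ((ρ + p) + Real.sqrt ((ρ + p) ^ 2 - 4 * ρ * p * u ^ 2)) / (2 * p * u) = ρ / (p * v) ∧
    |ρ / (p * v)| > 1 := by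
  have hv : v ≠ 0 := abs_pos.mp hv0
  have hv2 : v ^ 2 < 1 := by
    have := sq_abs v; nlinarith [abs_nonneg v]
  have hv2' : 0 < v ^ 2 := by positivity
  have hD : 0 < ρ + p * v ^ 2 := by nlinarith
  have hD' : 0 < ρ - p * v ^ 2 := by nlinarith
  have hDne : ρ + p * v ^ 2 ≠ 0 := ne_of_gt hD
  have eq1 : (ρ + p) ^ 2 - 4 * ρ * p * u ^ 2
      = ((ρ - p * v ^ 2) * (ρ + p) / (ρ + p * v ^ 2)) ^ 2 := by
    subst hu; field_simp; ring
  have hs : Real.sqrt ((ρ + p) ^ 2 - 4 * ρ * p * u ^ 2)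
      = (ρ - p * v ^ 2) * (ρ + p) / (ρ + p * v ^ 2) := by
    rw [eq1, Real.sqrt_sq (by positivity)]
  have hu0 : u ≠ 0 := by
    rw [hu]
    exact div_ne_zero (mul_ne_zero (by positivity) hv) hDne
  refine ⟨eq1, ?_, ?_, ?_, ?_⟩
  · intro X
    have key : p * u * X ^ 2 - (ρ + p) * X + ρ * u
        = (p * u) * ((X - v) * (X - ρ / (p * v))) := by
      subst hu; field_simp; ring
    rw [key]
    constructor
    · intro h
      rcases mul_eq_zero.mp h with h | h
      · exact absurd h (mul_ne_zero (ne_of_gt hp) hu0)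
      · rcases mul_eq_zero.mp h with h | h
        · exact Or.inl (by linarith [sub_eq_zero.mp h])
        · exact Or.inr (sub_eq_zero.mp h)
    · rintro (rfl | rfl) <;> ring
  · rw [hs]; subst hu; field_simp; ring
  · rw [hs]; subst hu; field_simp; ring
  · rw [abs_div, abs_mul, abs_of_pos hρ, abs_of_pos hp, gt_iff_lt,
      lt_div_iff₀ (by positivity)]
    nlinarith [abs_nonneg v]
end

section
/- Let ρ, p, v be real numbers with ρ > 0, 0 < p < ρ and |v| < 1, and set u := T01/T00. Then the physical velocity is uniquely recovered from u by the formula v = 2u/(1 + p/ρ + √((1 + p/ρ)² − 4·(p/ρ)·u²)). -/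
/-- For ρ > 0, 0 < p < ρ, |v| < 1 and u := T01/T00, the physical velocity is uniquely
    recovered by v = 2u/(1 + p/ρ + √((1 + p/ρ)² − 4(p/ρ)u²)). -/
theorem stmt_7 (ρ p v : ℝ) (hρ : 0 < ρ) (hp : 0 < p) (hpρ : p < ρ) (hv : |v| < 1)
    (W T00 T01 u : ℝ)
    (hW : W = (Real.sqrt (1 - v ^ 2))⁻¹)
    (hT00 : T00 = (ρ + p) * W ^ 2 - p)
    (hT01 : T01 = (ρ + p) * W ^ 2 * v)
    (hu : u = T01 / T00) :
    v = 2 * u / (1 + p / ρ + Real.sqrt ((1 + p / ρ) ^ 2 - 4 * (p / ρ) * u ^ 2)) := by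
  have hv2 : v ^ 2 < 1 := by
    have h := abs_lt.mp hv
    nlinarith [h.1, h.2]
  have h1 : (0:ℝ) < 1 - v ^ 2 := by linarith
  have hW2 : W ^ 2 = (1 - v ^ 2)⁻¹ := by
    rw [hW, inv_pow, Real.sq_sqrt h1.le]
  have hD : 0 < ρ + p * v ^ 2 := by nlinarith
  have hρ' : ρ ≠ 0 := hρ.ne'
  have hD' : ρ + p * v ^ 2 ≠ 0 := hD.ne'
  have h1' : 1 - v ^ 2 ≠ 0 := h1.ne'
  have hT00' : T00 = (ρ + p * v ^ 2) / (1 - v ^ 2) := by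
    rw [hT00, hW2]; field_simp; ring
  have hu' : u = (ρ + p) * v / (ρ + p * v ^ 2) := by
    rw [hu, hT01, hT00', hW2]
    field_simp
  have hkey : (1 + p / ρ) ^ 2 - 4 * (p / ρ) * u ^ 2
      = ((1 + p / ρ) * (1 - (p / ρ) * v ^ 2) / (1 + (p / ρ) * v ^ 2)) ^ 2 := by
    rw [hu']
    have hD2 : (1 : ℝ) + (p / ρ) * v ^ 2 ≠ 0 := by positivity
    field_simp
    ring
  have hqv : 0 < 1 - (p / ρ) * v ^ 2 := by
    have hq1 : p / ρ < 1 := (div_lt_one hρ).mpr hpρ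
    nlinarith [sq_nonneg v, hv2]
  have hpos : 0 ≤ (1 + p / ρ) * (1 - (p / ρ) * v ^ 2) / (1 + (p / ρ) * v ^ 2) := by
    positivity
  have hsqrt : Real.sqrt ((1 + p / ρ) ^ 2 - 4 * (p / ρ) * u ^ 2)
      = (1 + p / ρ) * (1 - (p / ρ) * v ^ 2) / (1 + (p / ρ) * v ^ 2) := by
    rw [hkey, Real.sqrt_sq hpos]
  rw [hsqrt]
  have hD2 : (0:ℝ) < 1 + (p / ρ) * v ^ 2 := by positivity
  have hN : (0:ℝ) < 1 + p / ρ + (1 + p / ρ) * (1 - p / ρ * v ^ 2) / (1 + p / ρ * v ^ 2) := by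
    positivity
  rw [eq_div_iff hN.ne', hu']
  field_simp
  ring
end

section
/- Let P be a barotropic equation of state, let ρ > 0 and v ∈ (−1, 1), set p = P(ρ), c_s = √(P'(ρ)), s1 = (v − c_s)/(1 − c_s·v) and s2 = (v + c_s)/(1 + c_s·v). Then for both choices n = (1, 1) and n = (1, −1) of the vector n, the GQL flux inequalities hold: F(U)·n > s1·(U·n) and F(U)·n < s2·(U·n), where U = (T00, T01) and F(U) = (T01, T11). -/
set_option maxHeartbeats 1000000


/-- GQL flux inequalities: for a barotropic equation of state, ρ > 0 and v ∈ (−1, 1),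
    with p = P(ρ), c_s = √(P'(ρ)), s1 = (v − c_s)/(1 − c_s v), s2 = (v + c_s)/(1 + c_s v),
    one has F(U)·n > s1·(U·n) and F(U)·n < s2·(U·n) for n = (1,1) and n = (1,−1). -/
theorem stmt_11 (P : ℝ → ℝ)
    (hdiff : Differentiable ℝ P) (hP0 : P 0 = 0)
    (hderiv : ∀ x : ℝ, 0 < deriv P x ∧ deriv P x < 1)
    (hsub : ∀ r : ℝ, 0 < r → P r < Real.sqrt (deriv P r) * r)
    (ρ v : ℝ) (hρ : 0 < ρ) (hv : v ∈ Set.Ioo (-1 : ℝ) 1)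
    (p cs s1 s2 W T00 T01 T11 : ℝ)
    (hp : p = P ρ)
    (hcs : cs = Real.sqrt (deriv P ρ))
    (hs1 : s1 = (v - cs) / (1 - cs * v))
    (hs2 : s2 = (v + cs) / (1 + cs * v))
    (hW : W = (Real.sqrt (1 - v ^ 2))⁻¹)
    (hT00 : T00 = (ρ + p) * W ^ 2 - p)
    (hT01 : T01 = (ρ + p) * W ^ 2 * v)
    (hT11 : T11 = (ρ * v ^ 2 + p) * W ^ 2) :
    ∀ n ∈ ({(1, 1), (1, -1)} : Set (ℝ × ℝ)),
      T01 * n.1 + T11 * n.2 > s1 * (T00 * n.1 + T01 * n.2) ∧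
      T01 * n.1 + T11 * n.2 < s2 * (T00 * n.1 + T01 * n.2) := by
  obtain ⟨hv1, hv2⟩ := hv
  have h1v2 : (0:ℝ) < 1 - v ^ 2 := by nlinarith
  have hcs2 : cs ^ 2 = deriv P ρ := by
    rw [hcs, sq, Real.mul_self_sqrt (hderiv ρ).1.le]
  have hcsp : 0 < cs := by rw [hcs]; exact Real.sqrt_pos.mpr (hderiv ρ).1
  have hcs1 : cs < 1 := by nlinarith [(hderiv ρ).2]
  have hmono : StrictMono P := strictMono_of_deriv_pos fun x => (hderiv x).1
  have hppos : 0 < p := by rw [hp, ← hP0]; exact hmono hρ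
  have hplt : p < cs * ρ := by rw [hp, hcs]; exact hsub ρ hρ
  have hW2 : W ^ 2 = (1 - v ^ 2)⁻¹ := by
    rw [hW, ← Real.sqrt_inv, sq, Real.mul_self_sqrt (by positivity)]
  have hden1 : (0:ℝ) < 1 - cs * v := by nlinarith
  have hden2 : (0:ℝ) < 1 + cs * v := by nlinarith
  have id1 : (T01 + T11) * (1 - cs * v) - (v - cs) * (T00 + T01)
      = (1 + v) * (p + cs * ρ) := by
    rw [hT00, hT01, hT11, hW2]; field_simp; ring
  have id2 : (v + cs) * (T00 + T01) - (T01 + T11) * (1 + cs * v)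
      = (1 + v) * (cs * ρ - p) := by
    rw [hT00, hT01, hT11, hW2]; field_simp; ring
  have id3 : (T01 - T11) * (1 - cs * v) - (v - cs) * (T00 - T01)
      = (1 - v) * (cs * ρ - p) := by
    rw [hT00, hT01, hT11, hW2]; field_simp; ring
  have id4 : (v + cs) * (T00 - T01) - (T01 - T11) * (1 + cs * v)
      = (1 - v) * (p + cs * ρ) := by
    rw [hT00, hT01, hT11, hW2]; field_simp; ring
  have hpos1 : (0:ℝ) < (1 + v) * (p + cs * ρ) := by nlinarith
  have hpos2 : (0:ℝ) < (1 + v) * (cs * ρ - p) := by nlinarith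
  have hpos3 : (0:ℝ) < (1 - v) * (cs * ρ - p) := by nlinarith
  have hpos4 : (0:ℝ) < (1 - v) * (p + cs * ρ) := by nlinarith
  intro n hn
  simp only [Set.mem_insert_iff, Set.mem_singleton_iff] at hn
  rcases hn with rfl | rfl
  · simp only [mul_one]
    constructor
    · rw [gt_iff_lt, hs1, div_mul_eq_mul_div, div_lt_iff₀ hden1]; nlinarith
    · rw [hs2, div_mul_eq_mul_div, lt_div_iff₀ hden2]; nlinarith
  · simp only [mul_one, mul_neg_one]
    constructor
    · rw [gt_iff_lt, hs1, div_mul_eq_mul_div, div_lt_iff₀ hden1]; nlinarith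
    · rw [hs2, div_mul_eq_mul_div, lt_div_iff₀ hden2]; nlinarith
end

section
/- Let P be a barotropic equation of state. For i = 1, 2, let ρ_i > 0, v_i ∈ (−1, 1), p_i = P(ρ_i), c_i = √(P'(ρ_i)), and let U_i = (T00_i, T01_i) and F_i = (T01_i, T11_i) be the corresponding conservative and flux vectors; let A_i, B_i > 0 be real numbers. Define the signal speeds αL = min{√(A_1 B_1)·(v_1 − c_1)/(1 − c_1 v_1), √(A_2 B_2)·(v_2 − c_2)/(1 − c_2 v_2), 0} and αR = max{√(A_1 B_1)·(v_1 + c_1)/(1 + c_1 v_1), √(A_2 B_2)·(v_2 + c_2)/(1 + c_2 v_2), 0}, assume αR − αL > 0, and let the HLL flux be F̂ = (αR·√(A_1 B_1)·F_1 − αL·√(A_2 B_2)·F_2 + αL·αR·(U_2 − U_1))/(αR − αL). If λ > 0 satisfies λ·max{−αL, αR} < 1, then for both n = (1, 1) and n = (1, −1): (U_2 + λ·F̂)·n > 0 and (U_1 − λ·F̂)·n > 0; in particular U_2 + λ·F̂ and U_1 − λ·F̂ lie in the admissible set G_c. -/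
lemma aux_combo (αl αr lam u1 u2 f1 f2 : ℝ)
    (hD : 0 < αr - αl) (hαl : αl ≤ 0) (hαr : 0 ≤ αr)
    (h1l : αl * u1 ≤ f1) (h1r : f1 ≤ αr * u1)
    (h2l : αl * u2 ≤ f2) (h2r : f2 ≤ αr * u2)
    (hu1 : 0 < u1) (hu2 : 0 < u2) (hlam : 0 < lam)
    (hcl : lam * (-αl) < 1) (hcr : lam * αr < 1) :
    0 < u2 + lam * ((αr * f1 - αl * f2 + αl * αr * (u2 - u1)) / (αr - αl)) ∧
    0 < u1 - lam * ((αr * f1 - αl * f2 + αl * αr * (u2 - u1)) / (αr - αl)) := by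
  have hD' : (αr - αl) ≠ 0 := ne_of_gt hD
  constructor
  · have hnum : 0 < (αr - αl) * u2 + lam * (αr * f1 - αl * f2 + αl * αr * (u2 - u1)) := by
      nlinarith [mul_nonneg (mul_nonneg hlam.le (neg_nonneg.mpr hαl)) (sub_nonneg.mpr h2l),
        mul_nonneg (mul_nonneg hlam.le hαr) (sub_nonneg.mpr h1l),
        mul_pos (mul_pos (by linarith : (0:ℝ) < 1 + lam * αl) hD) hu2]
    have heq : u2 + lam * ((αr * f1 - αl * f2 + αl * αr * (u2 - u1)) / (αr - αl))
        = ((αr - αl) * u2 + lam * (αr * f1 - αl * f2 + αl * αr * (u2 - u1))) / (αr - αl) := by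
      field_simp
    rw [heq]
    exact div_pos hnum hD
  · have hnum : 0 < (αr - αl) * u1 - lam * (αr * f1 - αl * f2 + αl * αr * (u2 - u1)) := by
      nlinarith [mul_nonneg (mul_nonneg hlam.le (neg_nonneg.mpr hαl)) (sub_nonneg.mpr h2r),
        mul_nonneg (mul_nonneg hlam.le hαr) (sub_nonneg.mpr h1r),
        mul_pos (mul_pos (by linarith : (0:ℝ) < 1 - lam * αr) hD) hu1]
    have heq : u1 - lam * ((αr * f1 - αl * f2 + αl * αr * (u2 - u1)) / (αr - αl))
        = ((αr - αl) * u1 - lam * (αr * f1 - αl * f2 + αl * αr * (u2 - u1))) / (αr - αl) := by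
      field_simp
    rw [heq]
    exact div_pos hnum hD

lemma aux_cancel (a b t : ℝ) (ht : 0 < t) (h : a * t ≤ b * t) : a ≤ b :=
  le_of_mul_le_mul_right h ht

set_option maxHeartbeats 1000000 in
lemma aux_state (ρ p c v s αl αr ε w2 : ℝ)
    (hρ : 0 < ρ) (hp : 0 < p) (hc : 0 < c) (hc1 : c < 1)
    (hv1 : -1 < v) (hv2 : v < 1) (hpc : p < c * ρ) (hs : 0 < s)
    (hw2 : w2 = (1 - v ^ 2)⁻¹)
    (hl : αl ≤ s * ((v - c) / (1 - c * v))) (hr : s * ((v + c) / (1 + c * v)) ≤ αr)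
    (hε : ε = 1 ∨ ε = -1) :
    0 < ((ρ + p) * w2 - p) + ε * ((ρ + p) * w2 * v) ∧
    αl * (((ρ + p) * w2 - p) + ε * ((ρ + p) * w2 * v))
      ≤ s * ((ρ + p) * w2 * v + ε * ((ρ * v ^ 2 + p) * w2)) ∧
    s * ((ρ + p) * w2 * v + ε * ((ρ * v ^ 2 + p) * w2))
      ≤ αr * (((ρ + p) * w2 - p) + ε * ((ρ + p) * w2 * v)) := by
  have h1v : (0:ℝ) < 1 - v := by linarith
  have h2v : (0:ℝ) < 1 + v := by linarith
  have hvsq : (0:ℝ) < 1 - v ^ 2 := by nlinarith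
  have hvne : (1 - v ^ 2) ≠ 0 := ne_of_gt hvsq
  have h1vne : (1 - v) ≠ 0 := ne_of_gt h1v
  have h2vne : (1 + v) ≠ 0 := ne_of_gt h2v
  have hcv : (0:ℝ) < 1 - c * v := by nlinarith [mul_pos hc h1v]
  have hcv' : (0:ℝ) < 1 + c * v := by nlinarith [mul_pos hc h2v]
  have hl' : αl * (1 - c * v) ≤ s * (v - c) := by
    have h := hl
    rw [mul_div_assoc'] at h
    exact (le_div_iff₀ hcv).mp h
  have hr' : s * (v + c) ≤ αr * (1 + c * v) := by
    have h := hr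
    rw [mul_div_assoc'] at h
    exact (div_le_iff₀ hcv').mp h
  have hρp : p < ρ := by nlinarith
  have hsp : (0:ℝ) ≤ s * ((c * ρ - p) * (1 - v ^ 2)) :=
    mul_nonneg hs.le (mul_nonneg (by linarith) hvsq.le)
  have hsp' : (0:ℝ) ≤ s * ((c * ρ + p) * (1 - v ^ 2)) :=
    mul_nonneg hs.le (mul_nonneg (by positivity) hvsq.le)
  rcases hε with hε | hε <;> subst hε <;> subst hw2
  · -- ε = 1 : u = (ρ + p v)/(1 - v), f = (ρ v + p)/(1 - v)
    have hue : ((ρ + p) * (1 - v ^ 2)⁻¹ - p) + 1 * ((ρ + p) * (1 - v ^ 2)⁻¹ * v)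
        = (ρ + p * v) / (1 - v) := by
      field_simp
      ring
    have hfe : (ρ + p) * (1 - v ^ 2)⁻¹ * v + 1 * ((ρ * v ^ 2 + p) * (1 - v ^ 2)⁻¹)
        = (ρ * v + p) / (1 - v) := by
      field_simp
      ring
    have hnum : (0:ℝ) < ρ + p * v := by nlinarith [mul_pos hp h2v]
    have hq1 : αl * (ρ + p * v) ≤ s * (ρ * v + p) := by
      refine aux_cancel _ _ _ hcv ?_
      have h1 : αl * (1 - c * v) * (ρ + p * v) ≤ s * (v - c) * (ρ + p * v) :=
        mul_le_mul_of_nonneg_right hl' hnum.le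
      have h2 : s * (v - c) * (ρ + p * v) ≤ s * (ρ * v + p) * (1 - c * v) := by
        nlinarith [hsp']
      linarith
    have hq2 : s * (ρ * v + p) ≤ αr * (ρ + p * v) := by
      refine aux_cancel _ _ _ hcv' ?_
      have h1 : s * (v + c) * (ρ + p * v) ≤ αr * (1 + c * v) * (ρ + p * v) :=
        mul_le_mul_of_nonneg_right hr' hnum.le
      have h2 : s * (ρ * v + p) * (1 + c * v) ≤ s * (v + c) * (ρ + p * v) := by
        nlinarith [hsp]
      linarith
    rw [hue, hfe]
    refine ⟨div_pos hnum h1v, ?_, ?_⟩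
    · rw [← mul_div_assoc, ← mul_div_assoc, div_le_div_iff₀ h1v h1v]
      exact mul_le_mul_of_nonneg_right hq1 h1v.le
    · rw [← mul_div_assoc, ← mul_div_assoc, div_le_div_iff₀ h1v h1v]
      exact mul_le_mul_of_nonneg_right hq2 h1v.le
  · -- ε = -1 : u = (ρ - p v)/(1 + v), f = (ρ v - p)/(1 + v)
    have hue : ((ρ + p) * (1 - v ^ 2)⁻¹ - p) + (-1) * ((ρ + p) * (1 - v ^ 2)⁻¹ * v)
        = (ρ - p * v) / (1 + v) := by
      field_simp
      ring
    have hfe : (ρ + p) * (1 - v ^ 2)⁻¹ * v + (-1) * ((ρ * v ^ 2 + p) * (1 - v ^ 2)⁻¹)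
        = (ρ * v - p) / (1 + v) := by
      field_simp
      ring
    have hnum : (0:ℝ) < ρ - p * v := by nlinarith [mul_pos hp h1v]
    have hq1 : αl * (ρ - p * v) ≤ s * (ρ * v - p) := by
      refine aux_cancel _ _ _ hcv ?_
      have h1 : αl * (1 - c * v) * (ρ - p * v) ≤ s * (v - c) * (ρ - p * v) :=
        mul_le_mul_of_nonneg_right hl' hnum.le
      have h2 : s * (v - c) * (ρ - p * v) ≤ s * (ρ * v - p) * (1 - c * v) := by
        nlinarith [hsp]
      linarith
    have hq2 : s * (ρ * v - p) ≤ αr * (ρ - p * v) := by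
      refine aux_cancel _ _ _ hcv' ?_
      have h1 : s * (v + c) * (ρ - p * v) ≤ αr * (1 + c * v) * (ρ - p * v) :=
        mul_le_mul_of_nonneg_right hr' hnum.le
      have h2 : s * (ρ * v - p) * (1 + c * v) ≤ s * (v + c) * (ρ - p * v) := by
        nlinarith [hsp']
      linarith
    rw [hue, hfe]
    refine ⟨div_pos hnum h2v, ?_, ?_⟩
    · rw [← mul_div_assoc, ← mul_div_assoc, div_le_div_iff₀ h2v h2v]
      exact mul_le_mul_of_nonneg_right hq1 h2v.le
    · rw [← mul_div_assoc, ← mul_div_assoc, div_le_div_iff₀ h2v h2v]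
      exact mul_le_mul_of_nonneg_right hq2 h2v.le



set_option maxHeartbeats 2000000 in
/-- HLL-flux constraint-preservation: with a barotropic equation of state, two admissible
    states, positive metric coefficients, the HLL signal speeds αL ≤ 0 ≤ αR with αR − αL > 0,
    and a time-step ratio λ > 0 with λ·max{−αL, αR} < 1, the states U₂ + λ·F̂ and U₁ − λ·F̂
    have positive dot product with n = (1,1) and n = (1,−1), and hence lie in G_c. -/
theorem stmt_12 (P : ℝ → ℝ)
    (hdiff : Differentiable ℝ P) (hP0 : P 0 = 0)
    (hderiv : ∀ x : ℝ, 0 < deriv P x ∧ deriv P x < 1)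
    (hsub : ∀ r : ℝ, 0 < r → P r < Real.sqrt (deriv P r) * r)
    (ρ₁ ρ₂ v₁ v₂ A₁ A₂ B₁ B₂ lam : ℝ)
    (hρ₁ : 0 < ρ₁) (hρ₂ : 0 < ρ₂)
    (hv₁ : v₁ ∈ Set.Ioo (-1 : ℝ) 1) (hv₂ : v₂ ∈ Set.Ioo (-1 : ℝ) 1)
    (hA₁ : 0 < A₁) (hA₂ : 0 < A₂) (hB₁ : 0 < B₁) (hB₂ : 0 < B₂)
    (p₁ p₂ c₁ c₂ W₁ W₂ : ℝ)
    (hp₁ : p₁ = P ρ₁) (hp₂ : p₂ = P ρ₂)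
    (hc₁ : c₁ = Real.sqrt (deriv P ρ₁)) (hc₂ : c₂ = Real.sqrt (deriv P ρ₂))
    (hW₁ : W₁ = (Real.sqrt (1 - v₁ ^ 2))⁻¹) (hW₂ : W₂ = (Real.sqrt (1 - v₂ ^ 2))⁻¹)
    (U₁ U₂ F₁ F₂ : ℝ × ℝ)
    (hU₁ : U₁ = ((ρ₁ + p₁) * W₁ ^ 2 - p₁, (ρ₁ + p₁) * W₁ ^ 2 * v₁))
    (hU₂ : U₂ = ((ρ₂ + p₂) * W₂ ^ 2 - p₂, (ρ₂ + p₂) * W₂ ^ 2 * v₂))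
    (hF₁ : F₁ = ((ρ₁ + p₁) * W₁ ^ 2 * v₁, (ρ₁ * v₁ ^ 2 + p₁) * W₁ ^ 2))
    (hF₂ : F₂ = ((ρ₂ + p₂) * W₂ ^ 2 * v₂, (ρ₂ * v₂ ^ 2 + p₂) * W₂ ^ 2))
    (αL αR : ℝ)
    (hαL : αL = min (min (Real.sqrt (A₁ * B₁) * ((v₁ - c₁) / (1 - c₁ * v₁)))
                         (Real.sqrt (A₂ * B₂) * ((v₂ - c₂) / (1 - c₂ * v₂)))) 0)
    (hαR : αR = max (max (Real.sqrt (A₁ * B₁) * ((v₁ + c₁) / (1 + c₁ * v₁)))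
                         (Real.sqrt (A₂ * B₂) * ((v₂ + c₂) / (1 + c₂ * v₂)))) 0)
    (hαdiff : 0 < αR - αL)
    (Fhat : ℝ × ℝ)
    (hFhat : Fhat = (αR - αL)⁻¹ •
      (αR • (Real.sqrt (A₁ * B₁) • F₁) - αL • (Real.sqrt (A₂ * B₂) • F₂)
        + (αL * αR) • (U₂ - U₁)))
    (hlam : 0 < lam) (hCFL : lam * max (-αL) αR < 1) :
    (∀ n ∈ ({(1, 1), (1, -1)} : Set (ℝ × ℝ)),
      (U₂ + lam • Fhat).1 * n.1 + (U₂ + lam • Fhat).2 * n.2 > 0 ∧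
      (U₁ - lam • Fhat).1 * n.1 + (U₁ - lam • Fhat).2 * n.2 > 0) ∧
    (U₂ + lam • Fhat) ∈ {x : ℝ × ℝ | x.1 - |x.2| > 0} ∧
    (U₁ - lam • Fhat) ∈ {x : ℝ × ℝ | x.1 - |x.2| > 0} := by
  have hs₁ : 0 < Real.sqrt (A₁ * B₁) := Real.sqrt_pos.mpr (mul_pos hA₁ hB₁)
  have hs₂ : 0 < Real.sqrt (A₂ * B₂) := Real.sqrt_pos.mpr (mul_pos hA₂ hB₂)
  have hmono : StrictMono P := strictMono_of_deriv_pos fun x => (hderiv x).1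
  have hp₁pos : 0 < p₁ := by rw [hp₁, ← hP0]; exact hmono hρ₁
  have hp₂pos : 0 < p₂ := by rw [hp₂, ← hP0]; exact hmono hρ₂
  have hc₁pos : 0 < c₁ := by rw [hc₁]; exact Real.sqrt_pos.mpr (hderiv ρ₁).1
  have hc₂pos : 0 < c₂ := by rw [hc₂]; exact Real.sqrt_pos.mpr (hderiv ρ₂).1
  have hc₁lt : c₁ < 1 := by
    rw [hc₁]
    nlinarith [Real.sq_sqrt (hderiv ρ₁).1.le, Real.sqrt_nonneg (deriv P ρ₁), (hderiv ρ₁).2]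
  have hc₂lt : c₂ < 1 := by
    rw [hc₂]
    nlinarith [Real.sq_sqrt (hderiv ρ₂).1.le, Real.sqrt_nonneg (deriv P ρ₂), (hderiv ρ₂).2]
  have hpc₁ : p₁ < c₁ * ρ₁ := by rw [hp₁, hc₁]; exact hsub ρ₁ hρ₁
  have hpc₂ : p₂ < c₂ * ρ₂ := by rw [hp₂, hc₂]; exact hsub ρ₂ hρ₂
  have hW₁sq : W₁ ^ 2 = (1 - v₁ ^ 2)⁻¹ := by
    rw [hW₁, inv_pow, Real.sq_sqrt (by nlinarith [hv₁.1, hv₁.2] : (0:ℝ) ≤ 1 - v₁ ^ 2)]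
  have hW₂sq : W₂ ^ 2 = (1 - v₂ ^ 2)⁻¹ := by
    rw [hW₂, inv_pow, Real.sq_sqrt (by nlinarith [hv₂.1, hv₂.2] : (0:ℝ) ≤ 1 - v₂ ^ 2)]
  have hL1 : αL ≤ Real.sqrt (A₁ * B₁) * ((v₁ - c₁) / (1 - c₁ * v₁)) := by
    rw [hαL]; exact le_trans (min_le_left _ _) (min_le_left _ _)
  have hL2 : αL ≤ Real.sqrt (A₂ * B₂) * ((v₂ - c₂) / (1 - c₂ * v₂)) := by
    rw [hαL]; exact le_trans (min_le_left _ _) (min_le_right _ _)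
  have hL0 : αL ≤ 0 := by rw [hαL]; exact min_le_right _ _
  have hR1 : Real.sqrt (A₁ * B₁) * ((v₁ + c₁) / (1 + c₁ * v₁)) ≤ αR := by
    rw [hαR]; exact le_trans (le_max_left _ _) (le_max_left _ _)
  have hR2 : Real.sqrt (A₂ * B₂) * ((v₂ + c₂) / (1 + c₂ * v₂)) ≤ αR := by
    rw [hαR]; exact le_trans (le_max_right _ _) (le_max_left _ _)
  have hR0 : 0 ≤ αR := by rw [hαR]; exact le_max_right _ _
  have hcl : lam * (-αL) < 1 :=
    lt_of_le_of_lt (mul_le_mul_of_nonneg_left (le_max_left (-αL) αR) hlam.le) hCFL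
  have hcr : lam * αR < 1 :=
    lt_of_le_of_lt (mul_le_mul_of_nonneg_left (le_max_right (-αL) αR) hlam.le) hCFL
  have hfinal : ∀ ε : ℝ, ε = 1 ∨ ε = -1 →
      0 < (U₂.1 + ε * U₂.2) + lam * (Fhat.1 + ε * Fhat.2) ∧
      0 < (U₁.1 + ε * U₁.2) - lam * (Fhat.1 + ε * Fhat.2) := by
    intro ε hε
    have hst₁ := aux_state ρ₁ p₁ c₁ v₁ (Real.sqrt (A₁ * B₁)) αL αR ε (W₁ ^ 2)
      hρ₁ hp₁pos hc₁pos hc₁lt hv₁.1 hv₁.2 hpc₁ hs₁ hW₁sq hL1 hR1 hε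
    have hst₂ := aux_state ρ₂ p₂ c₂ v₂ (Real.sqrt (A₂ * B₂)) αL αR ε (W₂ ^ 2)
      hρ₂ hp₂pos hc₂pos hc₂lt hv₂.1 hv₂.2 hpc₂ hs₂ hW₂sq hL2 hR2 hε
    have hU1c : U₁.1 + ε * U₁.2 = ((ρ₁ + p₁) * W₁ ^ 2 - p₁) + ε * ((ρ₁ + p₁) * W₁ ^ 2 * v₁) := by
      rw [hU₁]
    have hU2c : U₂.1 + ε * U₂.2 = ((ρ₂ + p₂) * W₂ ^ 2 - p₂) + ε * ((ρ₂ + p₂) * W₂ ^ 2 * v₂) := by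
      rw [hU₂]
    have hF1c : F₁.1 + ε * F₁.2 = (ρ₁ + p₁) * W₁ ^ 2 * v₁ + ε * ((ρ₁ * v₁ ^ 2 + p₁) * W₁ ^ 2) := by
      rw [hF₁]
    have hF2c : F₂.1 + ε * F₂.2 = (ρ₂ + p₂) * W₂ ^ 2 * v₂ + ε * ((ρ₂ * v₂ ^ 2 + p₂) * W₂ ^ 2) := by
      rw [hF₂]
    have h1pos : 0 < U₁.1 + ε * U₁.2 := by rw [hU1c]; exact hst₁.1
    have h2pos : 0 < U₂.1 + ε * U₂.2 := by rw [hU2c]; exact hst₂.1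
    have h1l : αL * (U₁.1 + ε * U₁.2) ≤ Real.sqrt (A₁ * B₁) * (F₁.1 + ε * F₁.2) := by
      rw [hU1c, hF1c]; exact hst₁.2.1
    have h1r : Real.sqrt (A₁ * B₁) * (F₁.1 + ε * F₁.2) ≤ αR * (U₁.1 + ε * U₁.2) := by
      rw [hU1c, hF1c]; exact hst₁.2.2
    have h2l : αL * (U₂.1 + ε * U₂.2) ≤ Real.sqrt (A₂ * B₂) * (F₂.1 + ε * F₂.2) := by
      rw [hU2c, hF2c]; exact hst₂.2.1
    have h2r : Real.sqrt (A₂ * B₂) * (F₂.1 + ε * F₂.2) ≤ αR * (U₂.1 + ε * U₂.2) := by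
      rw [hU2c, hF2c]; exact hst₂.2.2
    have hFn : Fhat.1 + ε * Fhat.2 =
        (αR * (Real.sqrt (A₁ * B₁) * (F₁.1 + ε * F₁.2))
          - αL * (Real.sqrt (A₂ * B₂) * (F₂.1 + ε * F₂.2))
          + αL * αR * ((U₂.1 + ε * U₂.2) - (U₁.1 + ε * U₁.2))) / (αR - αL) := by
      rw [hFhat]
      simp only [Prod.fst_add, Prod.snd_add, Prod.fst_sub, Prod.snd_sub, Prod.smul_fst,
        Prod.smul_snd, smul_eq_mul]
      ring
    have hcombo := aux_combo αL αR lam (U₁.1 + ε * U₁.2) (U₂.1 + ε * U₂.2)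
      (Real.sqrt (A₁ * B₁) * (F₁.1 + ε * F₁.2)) (Real.sqrt (A₂ * B₂) * (F₂.1 + ε * F₂.2))
      hαdiff hL0 hR0 h1l h1r h2l h2r h1pos h2pos hlam hcl hcr
    rw [hFn]
    exact hcombo
  obtain ⟨hp1, hp2⟩ := hfinal 1 (Or.inl rfl)
  obtain ⟨hm1, hm2⟩ := hfinal (-1) (Or.inr rfl)
  have hx1 : (U₂ + lam • Fhat).1 = U₂.1 + lam * Fhat.1 := by
    simp [smul_eq_mul]
  have hx2 : (U₂ + lam • Fhat).2 = U₂.2 + lam * Fhat.2 := by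
    simp [smul_eq_mul]
  have hy1 : (U₁ - lam • Fhat).1 = U₁.1 - lam * Fhat.1 := by
    simp [smul_eq_mul]
  have hy2 : (U₁ - lam • Fhat).2 = U₁.2 - lam * Fhat.2 := by
    simp [smul_eq_mul]
  refine ⟨?_, ?_, ?_⟩
  · intro n hn
    simp only [Set.mem_insert_iff, Set.mem_singleton_iff] at hn
    rcases hn with rfl | rfl <;>
      constructor <;>
        · simp only [hx1, hx2, hy1, hy2]
          norm_num
          linarith [hp1, hp2, hm1, hm2]
  · rw [Set.mem_setOf_eq]
    rcases abs_cases ((U₂ + lam • Fhat).2) with ⟨h, _⟩ | ⟨h, _⟩ <;> rw [h] <;>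
      rw [hx1, hx2] at * <;> linarith [hp1, hm1]
  · rw [Set.mem_setOf_eq]
    rcases abs_cases ((U₁ - lam • Fhat).2) with ⟨h, _⟩ | ⟨h, _⟩ <;> rw [h] <;>
      rw [hy1, hy2] at * <;> linarith [hp2, hm2]
end

section
/- Let a, b, ā, b̄, m, ε be real numbers with ε > 0, ā − |b̄| ≥ ε, m ≤ a − |b|, and m < ā − |b̄|. Define the scaling coefficient θ = min{(ε − (ā − |b̄|))/(m − (ā − |b̄|)), 1}. Then θ ∈ [0, 1] and the limited values ã = θ·(a − ā) + ā and b̃ = θ·(b − b̄) + b̄ satisfy ã − |b̃| ≥ ε > 0. -/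
/-- Pointwise constraint preservation of the local Zhang–Shu scaling limiter. -/
theorem stmt_13 (a b abar bbar m ε : ℝ) (hε : 0 < ε)
    (havg : abar - |bbar| ≥ ε) (hm : m ≤ a - |b|) (hm' : m < abar - |bbar|)
    (θ : ℝ)
    (hθ : θ = min ((ε - (abar - |bbar|)) / (m - (abar - |bbar|))) 1) :
    θ ∈ Set.Icc (0 : ℝ) 1 ∧
    (θ * (a - abar) + abar) - |θ * (b - bbar) + bbar| ≥ ε := by
  set A := abar - |bbar| with hA
  have hden : m - A < 0 := by linarith
  have hr0 : 0 ≤ (ε - A) / (m - A) :=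
    by rw [div_nonneg_iff]; right; exact ⟨by linarith, by linarith⟩
  have hθ0 : 0 ≤ θ := by rw [hθ]; exact le_min hr0 zero_le_one
  have hθ1 : θ ≤ 1 := by rw [hθ]; exact min_le_right _ _
  have hθr : θ ≤ (ε - A) / (m - A) := by rw [hθ]; exact min_le_left _ _
  have hkey : θ * (m - A) ≥ ε - A := by
    have := mul_le_mul_of_nonpos_right hθr (le_of_lt hden)
    rwa [div_mul_cancel₀ _ (ne_of_lt hden)] at this
  refine ⟨⟨hθ0, hθ1⟩, ?_⟩
  have habs : |θ * (b - bbar) + bbar| ≤ θ * |b| + (1 - θ) * |bbar| := by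
    have : θ * (b - bbar) + bbar = θ * b + (1 - θ) * bbar := by ring
    rw [this]
    calc |θ * b + (1 - θ) * bbar| ≤ |θ * b| + |(1 - θ) * bbar| := abs_add_le _ _
      _ = θ * |b| + (1 - θ) * |bbar| := by
          rw [abs_mul, abs_mul, abs_of_nonneg hθ0, abs_of_nonneg (show (0:ℝ) ≤ 1 - θ by linarith)]
  nlinarith [mul_le_mul_of_nonneg_left hm hθ0, habs, hkey]
end

section
/- Let u = (u₁, u₂) ∈ ℝ² with u₁ − |u₂| > 0 and let s = (s₁, s₂) ∈ ℝ² with s₁ − |s₂| < 0. Then there exists a unique λ_S > 0 such that (u₁ + λ_S·s₁) − |u₂ + λ_S·s₂| = 0, and moreover (u₁ + t·s₁) − |u₂ + t·s₂| > 0 for every t ∈ [0, λ_S); in particular u + t·s lies in the admissible set G_c for all t ∈ [0, λ_S). -/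
/-- Concavity interpolation: if `c > 0` is a root of `f`, then for `0 ≤ t ≤ c`
    we have `f t ≥ (1 - t/c) * f 0`. -/
lemma stmt_14_key (u₁ u₂ s₁ s₂ c : ℝ) (hc : 0 < c)
    (hroot : (u₁ + c * s₁) - |u₂ + c * s₂| = 0) :
    ∀ t, 0 ≤ t → t ≤ c →
      (u₁ + t * s₁) - |u₂ + t * s₂| ≥ (1 - t / c) * (u₁ - |u₂|) := by
  intro t ht htc
  have hθ0 : 0 ≤ t / c := div_nonneg ht hc.le
  have hθ1 : t / c ≤ 1 := (div_le_one hc).mpr htc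
  have hdecomp : u₂ + t * s₂ = (1 - t / c) * u₂ + (t / c) * (u₂ + c * s₂) := by
    field_simp; ring
  have habs : |u₂ + t * s₂| ≤ (1 - t / c) * |u₂| + (t / c) * |u₂ + c * s₂| := by
    calc |u₂ + t * s₂| = |(1 - t / c) * u₂ + (t / c) * (u₂ + c * s₂)| := by rw [hdecomp]
    _ ≤ |(1 - t / c) * u₂| + |(t / c) * (u₂ + c * s₂)| := abs_add_le _ _
    _ = (1 - t / c) * |u₂| + (t / c) * |u₂ + c * s₂| := by
        rw [abs_mul, abs_mul, abs_of_nonneg (by linarith), abs_of_nonneg hθ0]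
  have hlin : u₁ + t * s₁ = (1 - t / c) * u₁ + (t / c) * (u₁ + c * s₁) := by
    field_simp; ring
  have := hroot
  nlinarith [habs, hlin]

/-- For u ∈ G_c and s with s₁ − |s₂| < 0 there is a unique λ_S > 0 at which
    admissibility is marginally lost, and u + t·s ∈ G_c for all t ∈ [0, λ_S). -/
theorem stmt_14 (u₁ u₂ s₁ s₂ : ℝ) (hu : u₁ - |u₂| > 0) (hs : s₁ - |s₂| < 0) :
    ∃ lamS : ℝ, 0 < lamS ∧
      (u₁ + lamS * s₁) - |u₂ + lamS * s₂| = 0 ∧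
      (∀ μ : ℝ, 0 < μ → (u₁ + μ * s₁) - |u₂ + μ * s₂| = 0 → μ = lamS) ∧
      (∀ t ∈ Set.Ico (0 : ℝ) lamS,
        (u₁ + t * s₁) - |u₂ + t * s₂| > 0 ∧
        (u₁ + t * s₁, u₂ + t * s₂) ∈ {x : ℝ × ℝ | x.1 - |x.2| > 0}) := by
  set f : ℝ → ℝ := fun t => (u₁ + t * s₁) - |u₂ + t * s₂| with hf
  have hcont : Continuous f := by
    apply Continuous.sub
    · continuity
    · exact (continuous_const.add (continuous_id.mul continuous_const)).abs
  -- find T with f T < 0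
  set T : ℝ := (u₁ + |u₂| + 1) / (|s₂| - s₁) with hT
  have hden : 0 < |s₂| - s₁ := by linarith
  have hTpos : 0 < T := div_pos (by nlinarith [abs_nonneg u₂]) hden
  have hfT : f T < 0 := by
    have h1 : T * |s₂| - |u₂| ≤ |u₂ + T * s₂| := by
      have h := abs_sub_abs_le_abs_sub (T * s₂) (-u₂)
      rw [abs_neg, sub_neg_eq_add, add_comm (T * s₂) u₂] at h
      rw [abs_mul, abs_of_nonneg hTpos.le] at h
      linarith
    have hTval : T * (|s₂| - s₁) = u₁ + |u₂| + 1 := by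
      rw [hT]; field_simp
    simp only [hf]
    nlinarith
  -- IVT on [0, T]
  have h0T : (0:ℝ) ≤ T := hTpos.le
  have hiv : (0:ℝ) ∈ Set.Icc (f T) (f 0) := by
    constructor
    · exact hfT.le
    · show (0:ℝ) ≤ u₁ + 0 * s₁ - |u₂ + 0 * s₂|
      simp only [zero_mul, add_zero]
      linarith
  have := intermediate_value_Icc' h0T (hcont.continuousOn (s := Set.Icc 0 T))
  obtain ⟨c, hcmem, hcr⟩ := this hiv
  have hc0 : 0 < c := by
    rcases lt_or_eq_of_le hcmem.1 with h | h
    · exact h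
    · exfalso
      rw [← h] at hcr
      have : u₁ + 0 * s₁ - |u₂ + 0 * s₂| = 0 := hcr
      simp only [zero_mul, add_zero] at this
      linarith
  refine ⟨c, hc0, ?_, ?_, ?_⟩
  · simpa [hf] using hcr
  · intro μ hμ hμr
    by_contra hne
    rcases lt_or_gt_of_ne hne with h | h
    · have := stmt_14_key u₁ u₂ s₁ s₂ c hc0 (by simpa [hf] using hcr) μ hμ.le h.le
      rw [hμr] at this
      have hlt : μ / c < 1 := (div_lt_one hc0).mpr h
      nlinarith
    · have := stmt_14_key u₁ u₂ s₁ s₂ μ hμ hμr c hc0.le h.le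
      have hcr' : (u₁ + c * s₁) - |u₂ + c * s₂| = 0 := by simpa [hf] using hcr
      rw [hcr'] at this
      have hlt : c / μ < 1 := (div_lt_one hμ).mpr h
      nlinarith
  · intro t ⟨ht0, htc⟩
    have := stmt_14_key u₁ u₂ s₁ s₂ c hc0 (by simpa [hf] using hcr) t ht0 htc.le
    have hlt : t / c < 1 := (div_lt_one hc0).mpr htc
    constructor
    · nlinarith
    · simp only [Set.mem_setOf_eq]; nlinarith
end

section
/- For every c ∈ (0, 1), every ρ > 0, and every p with 0 < p < c·ρ, there exists a velocity v ∈ (−c, 0) such that, with s2 := (v + c)/(1 + c·v) > 0, the Lax–Friedrichs-type split state U + (1/s2)·F(U) does not lie in the admissible set G_c; specifically, its components satisfy (T00 + (1/s2)·T01) + (T01 + (1/s2)·T11) < 0. Thus the Lax–Friedrichs splitting based on the characteristic speed s2 fails in general to preserve G_c. -/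
set_option maxHeartbeats 1000000 in
/-- Violation of the Lax–Friedrichs splitting property: for every c ∈ (0,1), ρ > 0 and
    0 < p < cρ, there is a velocity v ∈ (−c, 0) for which, with s2 = (v + c)/(1 + cv) > 0,
    the LF-split state U + (1/s2)·F(U) fails to lie in G_c; in particular
    (T00 + (1/s2)T01) + (T01 + (1/s2)T11) < 0. -/
theorem stmt_15 :
    ∀ c ∈ Set.Ioo (0 : ℝ) 1, ∀ ρ : ℝ, 0 < ρ → ∀ p : ℝ, 0 < p → p < c * ρ →
      ∃ v ∈ Set.Ioo (-c) (0 : ℝ),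
        0 < (v + c) / (1 + c * v) ∧
        ((ρ + p) * ((Real.sqrt (1 - v ^ 2))⁻¹) ^ 2 - p
            + (1 / ((v + c) / (1 + c * v))) * ((ρ + p) * ((Real.sqrt (1 - v ^ 2))⁻¹) ^ 2 * v))
          + ((ρ + p) * ((Real.sqrt (1 - v ^ 2))⁻¹) ^ 2 * v
            + (1 / ((v + c) / (1 + c * v))) * ((ρ * v ^ 2 + p) * ((Real.sqrt (1 - v ^ 2))⁻¹) ^ 2))
          < 0 ∧
        ((ρ + p) * ((Real.sqrt (1 - v ^ 2))⁻¹) ^ 2 - p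
            + (1 / ((v + c) / (1 + c * v))) * ((ρ + p) * ((Real.sqrt (1 - v ^ 2))⁻¹) ^ 2 * v),
          (ρ + p) * ((Real.sqrt (1 - v ^ 2))⁻¹) ^ 2 * v
            + (1 / ((v + c) / (1 + c * v))) * ((ρ * v ^ 2 + p) * ((Real.sqrt (1 - v ^ 2))⁻¹) ^ 2))
          ∉ {x : ℝ × ℝ | x.1 - |x.2| > 0} := by
  intro c hc ρ hρ p hp hpc
  obtain ⟨hc0, hc1⟩ := hc
  have hcp : 0 < c * ρ - p := by linarith
  have h1c2 : 0 < 1 - c ^ 2 := by nlinarith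
  set ε := min ((c * ρ - p) / (2 * ρ)) ((c * ρ - p) * (1 - c ^ 2) / (8 * (ρ + p))) with hεdef
  have hε0 : 0 < ε := lt_min (by positivity) (by positivity)
  have hε1 : ε ≤ (c * ρ - p) / (2 * ρ) := min_le_left _ _
  have hε2 : ε ≤ (c * ρ - p) * (1 - c ^ 2) / (8 * (ρ + p)) := min_le_right _ _
  have hεc : ε < c := by
    have : (c * ρ - p) / (2 * ρ) < c := by
      rw [div_lt_iff₀ (by positivity)]; nlinarith
    linarith
  set v := ε - c with hvdef
  have hvc : v + c = ε := by ring
  have hv0 : v < 0 := by linarith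
  have hv1 : -1 < v := by linarith
  have hW : 0 < 1 - v ^ 2 := by nlinarith
  have hcv : 0 < 1 + c * v := by nlinarith
  have hsq : ((Real.sqrt (1 - v ^ 2))⁻¹) ^ 2 = (1 - v ^ 2)⁻¹ := by
    rw [inv_pow, Real.sq_sqrt hW.le]
  have hs2 : 0 < (v + c) / (1 + c * v) := by
    rw [hvc]; positivity
  -- key polynomial inequality
  have hε1' : ε * (2 * ρ) ≤ c * ρ - p := by
    rw [← le_div_iff₀ (by positivity)]; exact hε1
  have hε2' : ε * (8 * (ρ + p)) ≤ (c * ρ - p) * (1 - c ^ 2) := by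
    rw [← le_div_iff₀ (by positivity)]; exact hε2
  have hb1 : ρ * v + p ≤ (p - c * ρ) / 2 := by
    have hv : v = ε - c := hvdef
    nlinarith [hε1']
  have hb2 : (ρ + p) * (v + c) ≤ (c * ρ - p) * (1 - c ^ 2) / 8 := by
    rw [hvc]; linarith [hε2']
  have hkey : (ρ + p) * (v + c) - p * (1 - v) * (v + c) + (1 + c * v) * (ρ * v + p) < 0 := by
    have hneg : ρ * v + p < 0 := by nlinarith
    have hcv2 : 1 - c ^ 2 ≤ 1 + c * v := by nlinarith
    have h3a : (1 + c * v) * (ρ * v + p) ≤ (1 - c ^ 2) * (ρ * v + p) :=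
      mul_le_mul_of_nonpos_right hcv2 hneg.le
    have h3b : (1 - c ^ 2) * (ρ * v + p) ≤ (1 - c ^ 2) * ((p - c * ρ) / 2) :=
      mul_le_mul_of_nonneg_left hb1 h1c2.le
    have h4 : 0 ≤ p * (1 - v) * (v + c) := by
      have hvc0 : 0 < v + c := by rw [hvc]; exact hε0
      have h1v : 0 < 1 - v := by linarith
      positivity
    have hK : 0 < (c * ρ - p) * (1 - c ^ 2) := mul_pos hcp h1c2
    nlinarith [h3a, h3b, h4, hb2, hK]
  have hlt :
      ((ρ + p) * ((Real.sqrt (1 - v ^ 2))⁻¹) ^ 2 - p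
          + (1 / ((v + c) / (1 + c * v))) * ((ρ + p) * ((Real.sqrt (1 - v ^ 2))⁻¹) ^ 2 * v))
        + ((ρ + p) * ((Real.sqrt (1 - v ^ 2))⁻¹) ^ 2 * v
          + (1 / ((v + c) / (1 + c * v))) * ((ρ * v ^ 2 + p) * ((Real.sqrt (1 - v ^ 2))⁻¹) ^ 2))
        < 0 := by
    rw [hsq]
    have hne1 : (1 : ℝ) - v ^ 2 ≠ 0 := hW.ne'
    have hne2 : v + c ≠ 0 := by rw [hvc]; exact hε0.ne'
    have heq :
        ((ρ + p) * (1 - v ^ 2)⁻¹ - p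
            + (1 / ((v + c) / (1 + c * v))) * ((ρ + p) * (1 - v ^ 2)⁻¹ * v))
          + ((ρ + p) * (1 - v ^ 2)⁻¹ * v
            + (1 / ((v + c) / (1 + c * v))) * ((ρ * v ^ 2 + p) * (1 - v ^ 2)⁻¹))
        = ((1 + v) * ((ρ + p) * (v + c) - p * (1 - v) * (v + c) + (1 + c * v) * (ρ * v + p)))
            / ((1 - v ^ 2) * (v + c)) := by
      field_simp
      ring
    rw [heq]
    apply div_neg_of_neg_of_pos
    · have h1v : 0 < 1 + v := by linarith
      exact mul_neg_of_pos_of_neg h1v hkey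
    · exact mul_pos hW (by rw [hvc]; exact hε0)
  refine ⟨v, ⟨by linarith [hε0, hvc], hv0⟩, hs2, hlt, ?_⟩
  simp only [Set.mem_setOf_eq, gt_iff_lt, not_lt]
  have habs := neg_abs_le ((ρ + p) * ((Real.sqrt (1 - v ^ 2))⁻¹) ^ 2 * v
      + (1 / ((v + c) / (1 + c * v))) * ((ρ * v ^ 2 + p) * ((Real.sqrt (1 - v ^ 2))⁻¹) ^ 2))
  linarith
end
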